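/- Let A ∈ M_d(ℤ) ∩ GL_d(ℝ) be a hyperbolic integer matrix, let F : ℝ^d → ℝ^d be a bijection that is a lift of a torus map with linearization A, and let H : ℝ^d → ℝ^d be a bijection with A ∘ H = H ∘ F, sup_{x∈ℝ^d} ‖H(x) − x‖ < ∞, and H^{-1} uniformly continuous. Then there exists a sequence ε_m → 0 such that for every m ≥ 1, every x ∈ ℝ^d, and every n ∈ ℤ^d with A^{-i} n ∈ ℤ^d for all 1 ≤ i ≤ m, one has ‖H^{-1}(x + n) − H^{-1}(x) − n‖ ≤ ε_m. Equivalently: for every ε > 0 there exists M ∈ ℕ such that the above difference has norm at most ε whenever m ≥ M. -/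

import Mathlib

/-- A vector of integers viewed as a point of `ℝ^d`. -/
noncomputable def intVec {d : ℕ} (n : Fin d → ℤ) : EuclideanSpace ℝ (Fin d) :=
  WithLp.toLp 2 (fun i => (n i : ℝ))

/-- Matrix-vector multiplication, viewed as a map of `ℝ^d = EuclideanSpace ℝ (Fin d)`. -/
noncomputable def mulVecE {d : ℕ} (A : Matrix (Fin d) (Fin d) ℝ)
    (x : EuclideanSpace ℝ (Fin d)) : EuclideanSpace ℝ (Fin d) :=
  WithLp.toLp 2 (A.mulVec x)

/-!
Write `Δ_H(x, v) = H(x + v) - H(x) - v`. Conjugating by `A` gives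
`A^i Δ_H(x, n) = Δ_H(F^i x, A^i n)`, and `Δ_H` is bounded by `2 sup ‖H - id‖`. So if
`n ∈ A^m ℤ^d`, the vector `Δ_H(H⁻¹ x, n)` has all forward iterates and its first `m` backward
iterates under `A` bounded by the same constant. By hyperbolicity no nonzero vector has a bounded
two-sided orbit; by compactness the vectors whose orbit is bounded from time `-m` on are therefore
uniformly small for large `m`. Uniform continuity of `H⁻¹` turns smallness of `Δ_H(H⁻¹ x, n)`
into smallness of `Δ_{H⁻¹}(x, n)`.
-/

open Matrix Filter Topology Function

theorem eq_one_of_forall_zpow_mul_le {a c M : ℝ} (ha : 0 < a) (hc : 0 < c)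
    (h : ∀ k : ℤ, a ^ k * c ≤ M) : a = 1 := by
  by_contra ha1
  rcases lt_or_gt_of_ne ha1 with hlt | hgt
  · obtain ⟨k, hk⟩ := pow_unbounded_of_one_lt (M / c) ((one_lt_inv₀ ha).mpr hlt)
    have := h (-k)
    rw [_root_.zpow_neg, zpow_natCast, ← inv_pow] at this
    exact this.not_gt ((div_lt_iff₀ hc).mp hk)
  · obtain ⟨k, hk⟩ := pow_unbounded_of_one_lt (M / c) hgt
    have := h k
    rw [zpow_natCast] at this
    exact this.not_gt ((div_lt_iff₀ hc).mp hk)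

theorem EuclideanSpace.pi_norm_ofReal_le {n : Type*} [Fintype n] (x : EuclideanSpace ℝ n) :
    ‖fun i => (x i : ℂ)‖ ≤ ‖x‖ :=
  (pi_norm_le_iff_of_nonneg (norm_nonneg x)).mpr fun i => by
    rw [Complex.norm_real]
    exact PiLp.norm_apply_le x i

namespace Matrix

variable {n : Type*} [Fintype n] [DecidableEq n]

theorem map_zpow {R S : Type*} [CommRing R] [CommRing S] (f : R →+* S) {A : Matrix n n R}
    (hA : IsUnit A.det) (k : ℤ) : (A ^ k).map f = A.map f ^ k := by
  have hpow : ∀ i : ℕ, (A ^ i).map f = A.map f ^ i := map_pow f.mapMatrix A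
  cases k with
  | ofNat i => simpa using hpow i
  | negSucc i =>
    rw [zpow_negSucc, zpow_negSucc, ← hpow]
    refine (inv_eq_left_inv ?_).symm
    rw [← Matrix.map_mul, nonsing_inv_mul _ (det_pow A _ ▸ hA.pow _),
      Matrix.map_one _ f.map_zero f.map_one]

theorem zpow_mulVec_of_mulVec_eq_smul {B : Matrix n n ℂ} (hB : IsUnit B.det) {μ : ℂ}
    (hμ : μ ≠ 0) {v : n → ℂ} (hv : B *ᵥ v = μ • v) (k : ℤ) : (B ^ k) *ᵥ v = μ ^ k • v := by
  have hinv : B⁻¹ *ᵥ v = μ⁻¹ • v := by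
    rw [eq_inv_smul_iff₀ hμ, ← mulVec_smul, ← hv, mulVec_mulVec, nonsing_inv_mul _ hB,
      one_mulVec]
  induction k using Int.induction_on with
  | zero => simp
  | succ k ih =>
    rw [zpow_add_one hB, ← mulVec_mulVec, hv, mulVec_smul, ih, smul_smul, zpow_add_one₀ hμ,
      mul_comm]
  | pred k ih =>
    rw [zpow_sub_one hB, ← mulVec_mulVec, hinv, mulVec_smul, ih, smul_smul, zpow_sub_one₀ hμ,
      mul_comm]

def boundedOrbitSubmodule (B : Matrix n n ℂ) : Submodule ℂ (n → ℂ) where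
  carrier := {v | ∃ M, ∀ k : ℤ, ‖(B ^ k) *ᵥ v‖ ≤ M}
  add_mem' := by
    rintro v w ⟨M, hM⟩ ⟨N, hN⟩
    refine ⟨M + N, fun k => ?_⟩
    rw [mulVec_add]
    exact (norm_add_le _ _).trans (add_le_add (hM k) (hN k))
  zero_mem' := ⟨0, fun k => by simp⟩
  smul_mem' := by
    rintro c v ⟨M, hM⟩
    refine ⟨‖c‖ * M, fun k => ?_⟩
    rw [mulVec_smul, norm_smul]
    exact mul_le_mul_of_nonneg_left (hM k) (norm_nonneg c)

theorem mulVec_mem_boundedOrbitSubmodule {B : Matrix n n ℂ} (hB : IsUnit B.det) {v : n → ℂ}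
    (hv : v ∈ B.boundedOrbitSubmodule) : B *ᵥ v ∈ B.boundedOrbitSubmodule := by
  obtain ⟨M, hM⟩ := hv
  exact ⟨M, fun k => by rw [mulVec_mulVec, ← zpow_add_one hB]; exact hM (k + 1)⟩

/-- If the bounded-orbit subspace were nonzero, `B` would have an eigenvector in it, whose orbit
`μ ^ k • v` is bounded only if `‖μ‖ = 1`. -/
theorem boundedOrbitSubmodule_eq_bot {B : Matrix n n ℂ} (hB : IsUnit B.det)
    (hhyp : ∀ μ : ℂ, B.charpoly.IsRoot μ → ‖μ‖ ≠ 1) : B.boundedOrbitSubmodule = ⊥ := by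
  by_contra hW
  have : Nontrivial B.boundedOrbitSubmodule := Submodule.nontrivial_iff_ne_bot.mpr hW
  obtain ⟨μ, hμ⟩ := Module.End.exists_eigenvalue
    ((toLin' B).restrict fun v => mulVec_mem_boundedOrbitSubmodule hB)
  obtain ⟨⟨v, M, hM⟩, hv⟩ := hμ.exists_hasEigenvector
  have hBv : B *ᵥ v = μ • v := congrArg Subtype.val hv.apply_eq_smul
  have hv0 : v ≠ 0 := fun h => hv.2 (Subtype.ext h)
  have hμ0 : μ ≠ 0 := by
    rintro rfl
    exact hB.ne_zero (exists_mulVec_eq_zero_iff.mp ⟨v, hv0, by simpa using hBv⟩)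
  have hroot : B.charpoly.IsRoot μ := by
    rw [Polynomial.IsRoot, eval_charpoly, ← exists_mulVec_eq_zero_iff]
    exact ⟨v, hv0, by simp [sub_mulVec, hBv]⟩
  refine hhyp μ hroot (eq_one_of_forall_zpow_mul_le (norm_pos_iff.mpr hμ0)
    (norm_pos_iff.mpr hv0) (M := M) fun k => ?_)
  simpa [zpow_mulVec_of_mulVec_eq_smul hB hμ0 hBv, norm_smul] using hM k

theorem eq_zero_of_forall_norm_zpow_le {R : Matrix n n ℝ} (hR : R.det ≠ 0)
    (hhyp : ∀ μ : ℂ, (R.map ((↑) : ℝ → ℂ)).charpoly.IsRoot μ → ‖μ‖ ≠ 1)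
    {x : EuclideanSpace ℝ n} {M : ℝ} (hx : ∀ k : ℤ, ‖toEuclideanCLM (𝕜 := ℝ) (R ^ k) x‖ ≤ M) :
    x = 0 := by
  have hB : IsUnit (R.map ((↑) : ℝ → ℂ)).det := by
    have := RingHom.map_det Complex.ofRealHom R
    rw [RingHom.mapMatrix_apply, Complex.ofRealHom_eq_coe] at this
    exact this ▸ (Complex.ofReal_ne_zero.mpr hR).isUnit
  have hmem : (fun i => (x i : ℂ)) ∈ (R.map ((↑) : ℝ → ℂ)).boundedOrbitSubmodule := by
    refine ⟨M, fun k => (le_of_eq ?_).trans ((EuclideanSpace.pi_norm_ofReal_le _).trans (hx k))⟩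
    have hmap : (R ^ k).map ((↑) : ℝ → ℂ) = R.map ((↑) : ℝ → ℂ) ^ k :=
      map_zpow Complex.ofRealHom (isUnit_iff_ne_zero.mpr hR) k
    congr 1
    ext i
    rw [← hmap]
    exact (Complex.ofRealHom.map_mulVec (R ^ k) x i).symm
  rw [boundedOrbitSubmodule_eq_bot hB hhyp, Submodule.mem_bot] at hmem
  ext i
  simpa using congrFun hmem i

/-- The sets of vectors whose orbit is bounded from time `-N` on are compact and decrease to
`{0}`, so they eventually lie in any neighbourhood of `0`. -/
theorem exists_forall_norm_lt_of_forall_norm_zpow_le {R : Matrix n n ℝ} (hR : R.det ≠ 0)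
    (hhyp : ∀ μ : ℂ, (R.map ((↑) : ℝ → ℂ)).charpoly.IsRoot μ → ‖μ‖ ≠ 1) (D : ℝ) {δ : ℝ}
    (hδ : 0 < δ) :
    ∃ N : ℕ, ∀ x : EuclideanSpace ℝ n,
      (∀ k : ℤ, -(N : ℤ) ≤ k → ‖toEuclideanCLM (𝕜 := ℝ) (R ^ k) x‖ ≤ D) → ‖x‖ < δ := by
  set K : ℕ → Set (EuclideanSpace ℝ n) :=
    fun N => {x | ∀ k : ℤ, -(N : ℤ) ≤ k → ‖toEuclideanCLM (𝕜 := ℝ) (R ^ k) x‖ ≤ D}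
  have hanti : Antitone K := fun N N' hNN' x hx k hk => hx k (by omega)
  have hclosed : ∀ N, IsClosed (K N) := fun N => by
    simp only [K, Set.ofPred_forall]
    exact isClosed_iInter fun k => isClosed_iInter fun _ =>
      isClosed_le (by fun_prop) continuous_const
  have hcompact : ∀ N, IsCompact (K N) := fun N =>
    (isCompact_closedBall 0 D).of_isClosed_subset (hclosed N) fun x hx => by
      simpa using hx 0 (by omega)
  obtain ⟨N, hN⟩ := exists_subset_nhds_of_isCompact hanti.directed_ge hcompact
    (U := Metric.ball 0 δ) fun x hx => by
      obtain ⟨M, hM⟩ : ∃ M, ∀ k : ℤ, ‖toEuclideanCLM (𝕜 := ℝ) (R ^ k) x‖ ≤ M :=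
        ⟨D, fun k => Set.mem_iInter.mp hx k.natAbs k (by omega)⟩
      rw [eq_zero_of_forall_norm_zpow_le hR hhyp hM]
      exact Metric.ball_mem_nhds 0 hδ
  exact ⟨N, fun x hx => by simpa using hN hx⟩

end Matrix

theorem mulVecE_eq_toEuclideanCLM {d : ℕ} (M : Matrix (Fin d) (Fin d) ℝ) :
    mulVecE M = toEuclideanCLM (𝕜 := ℝ) M :=
  rfl

theorem mulVecE_map_intVec {d : ℕ} (P : Matrix (Fin d) (Fin d) ℤ) (k : Fin d → ℤ) :
    mulVecE (P.map ((↑) : ℤ → ℝ)) (intVec k) = intVec (P *ᵥ k) := by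
  ext j
  exact ((Int.castRingHom ℝ).map_mulVec P k j).symm

def translationDefect {E : Type*} [AddCommGroup E] (H : E → E) (x v : E) : E :=
  H (x + v) - H x - v

theorem norm_translationDefect_le {E : Type*} [SeminormedAddCommGroup E] {H : E → E} {C : ℝ}
    (hC : ∀ x, ‖H x - x‖ ≤ C) (x v : E) : ‖translationDefect H x v‖ ≤ 2 * C := by
  have : translationDefect H x v = (H (x + v) - (x + v)) - (H x - x) := by
    unfold translationDefect; abel
  rw [this, two_mul]
  exact (norm_sub_le _ _).trans (add_le_add (hC _) (hC _))

theorem exists_norm_translationDefect_lt_of_uniformContinuous {E : Type*}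
    [SeminormedAddCommGroup E] {H G : E → E} (hinv₁ : LeftInverse G H)
    (hinv₂ : RightInverse G H) (hG : UniformContinuous G) {η : ℝ} (hη : 0 < η) :
    ∃ δ > 0, ∀ x v : E, ‖translationDefect H (G x) v‖ < δ → ‖translationDefect G x v‖ < η := by
  obtain ⟨δ, hδ, hGδ⟩ := Metric.uniformContinuous_iff.mp hG η hη
  refine ⟨δ, hδ, fun x v hxv => ?_⟩
  have hH : H (G x + v) - (x + v) = translationDefect H (G x) v := by
    rw [translationDefect, hinv₂ x, sub_sub]
  have hG' : G x + v - G (x + v) = -translationDefect G x v := by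
    rw [translationDefect]; abel
  have := @hGδ (H (G x + v)) (x + v) (by rwa [dist_eq_norm, hH])
  rwa [hinv₁, dist_eq_norm, hG', norm_neg] at this

section TorusLift

variable {d : ℕ} (A : Matrix (Fin d) (Fin d) ℤ)
  {F H : EuclideanSpace ℝ (Fin d) → EuclideanSpace ℝ (Fin d)}

theorem iterate_add_intVec
    (hlift : ∀ x n, F (x + intVec n) = F x + mulVecE (A.map ((↑) : ℤ → ℝ)) (intVec n))
    (i : ℕ) (x : EuclideanSpace ℝ (Fin d)) (n : Fin d → ℤ) :
    F^[i] (x + intVec n) = F^[i] x + intVec ((A ^ i) *ᵥ n) := by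
  induction i generalizing x n with
  | zero => simp
  | succ i ih =>
    rw [iterate_succ_apply, iterate_succ_apply, hlift, mulVecE_map_intVec, ih, mulVec_mulVec,
      ← pow_succ]

theorem toEuclideanCLM_pow_apply_eq_apply_iterate
    (hconj : ∀ x, mulVecE (A.map ((↑) : ℤ → ℝ)) (H x) = H (F x)) (i : ℕ)
    (x : EuclideanSpace ℝ (Fin d)) :
    toEuclideanCLM (𝕜 := ℝ) (A.map ((↑) : ℤ → ℝ) ^ i) (H x) = H (F^[i] x) := by
  induction i generalizing x with
  | zero => simp
  | succ i ih =>
    rw [pow_succ', map_mul, mul_apply_eq_comp, ih, ← mulVecE_eq_toEuclideanCLM, hconj,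
      iterate_succ_apply']

theorem toEuclideanCLM_pow_translationDefect
    (hlift : ∀ x n, F (x + intVec n) = F x + mulVecE (A.map ((↑) : ℤ → ℝ)) (intVec n))
    (hconj : ∀ x, mulVecE (A.map ((↑) : ℤ → ℝ)) (H x) = H (F x)) (i : ℕ)
    (x : EuclideanSpace ℝ (Fin d)) (n : Fin d → ℤ) :
    toEuclideanCLM (𝕜 := ℝ) (A.map ((↑) : ℤ → ℝ) ^ i) (translationDefect H x (intVec n)) =
      translationDefect H (F^[i] x) (intVec ((A ^ i) *ᵥ n)) := by
  have hpow : A.map ((↑) : ℤ → ℝ) ^ i = (A ^ i).map (↑) :=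
    (map_pow (Int.castRingHom ℝ).mapMatrix A i).symm
  rw [translationDefect, map_sub, map_sub, toEuclideanCLM_pow_apply_eq_apply_iterate A hconj,
    toEuclideanCLM_pow_apply_eq_apply_iterate A hconj, iterate_add_intVec A hlift, hpow,
    ← mulVecE_eq_toEuclideanCLM, mulVecE_map_intVec, translationDefect]

/-- For `n = A^i n'` with `i ≤ m`, the backward iterate `A^(-i)` of the defect at `x = F^i z` is
the defect at `z`, hence bounded as well. -/
theorem norm_toEuclideanCLM_zpow_translationDefect_le (hA : (A.map ((↑) : ℤ → ℝ)).det ≠ 0)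
    (hF : Surjective F)
    (hlift : ∀ x n, F (x + intVec n) = F x + mulVecE (A.map ((↑) : ℤ → ℝ)) (intVec n))
    (hconj : ∀ x, mulVecE (A.map ((↑) : ℤ → ℝ)) (H x) = H (F x)) {C : ℝ}
    (hC : ∀ x, ‖H x - x‖ ≤ C) {m : ℕ} {n : Fin d → ℤ}
    (hn : ∀ i : ℕ, 1 ≤ i → i ≤ m → ∃ n' : Fin d → ℤ, (A ^ i) *ᵥ n' = n)
    (x : EuclideanSpace ℝ (Fin d)) {k : ℤ} (hk : -(m : ℤ) ≤ k) :
    ‖toEuclideanCLM (𝕜 := ℝ) (A.map ((↑) : ℤ → ℝ) ^ k) (translationDefect H x (intVec n))‖ ≤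
      2 * C := by
  obtain ⟨i, rfl | rfl⟩ := Int.eq_nat_or_neg k
  · rw [zpow_natCast, toEuclideanCLM_pow_translationDefect A hlift hconj]
    exact norm_translationDefect_le hC _ _
  rcases Nat.eq_zero_or_pos i with rfl | hi
  · simpa using norm_translationDefect_le hC x (intVec n)
  obtain ⟨n', rfl⟩ := hn i hi (by omega)
  obtain ⟨z, rfl⟩ := hF.iterate i x
  rw [← toEuclideanCLM_pow_translationDefect A hlift hconj, ← mul_apply_eq_comp, ← map_mul,
    ← zpow_natCast, zpow_neg_mul_zpow_self _ (isUnit_iff_ne_zero.mpr hA), map_one]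
  exact norm_translationDefect_le hC _ _

end TorusLift

theorem exists_tendsto_zero_forall_le {ι : ℕ → Type*} (f : ∀ m, ι m → ℝ)
    (hf0 : ∀ m i, 0 ≤ f m i) (hbdd : ∀ m, BddAbove (Set.range (f m)))
    (hsmall : ∀ η > 0, ∃ N, ∀ m ≥ N, ∀ i, f m i ≤ η) :
    ∃ ε : ℕ → ℝ, Tendsto ε atTop (𝓝 0) ∧ ∀ m i, f m i ≤ ε m := by
  refine ⟨fun m => ⨆ i, f m i, Metric.tendsto_atTop.mpr fun η hη => ?_,
    fun m i => le_ciSup (hbdd m) i⟩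
  obtain ⟨N, hN⟩ := hsmall (η / 2) (half_pos hη)
  refine ⟨N, fun m hm => ?_⟩
  have hle : ⨆ i, f m i ≤ η / 2 := Real.iSup_le (hN m hm) (half_pos hη).le
  rw [Real.dist_eq, sub_zero, abs_of_nonneg (Real.iSup_nonneg (hf0 m))]
  linarith

/-- Let `A ∈ M_d(ℤ) ∩ GL_d(ℝ)` be hyperbolic, `F` a bijective lift of a
torus map with linearization `A`, and `H` a bijection (with inverse `G = H⁻¹`) such that
`A ∘ H = H ∘ F`, `sup ‖H - id‖ < ∞` and `H⁻¹` uniformly continuous. Then there is a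
sequence `ε_m → 0` such that for every `m ≥ 1`, every `x ∈ ℝ^d`, and every `n ∈ ℤ^d` with
`A^(-i) n ∈ ℤ^d` for all `1 ≤ i ≤ m`, one has `‖H⁻¹(x+n) - H⁻¹(x) - n‖ ≤ ε_m`. -/
theorem stmt7 (d : ℕ) (A : Matrix (Fin d) (Fin d) ℤ)
    (hdet : (A.map ((↑) : ℤ → ℝ)).det ≠ 0)
    (hhyp : ∀ μ : ℂ, (Matrix.charpoly (A.map ((↑) : ℤ → ℂ))).IsRoot μ → ‖μ‖ ≠ 1)
    (F H G : EuclideanSpace ℝ (Fin d) → EuclideanSpace ℝ (Fin d))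
    (hFbij : Function.Bijective F)
    (hinv₁ : Function.LeftInverse G H) (hinv₂ : Function.RightInverse G H)
    (hlift : ∀ (x : EuclideanSpace ℝ (Fin d)) (n : Fin d → ℤ),
      F (x + intVec n) = F x + mulVecE (A.map ((↑) : ℤ → ℝ)) (intVec n))
    (hconj : ∀ x : EuclideanSpace ℝ (Fin d),
      mulVecE (A.map ((↑) : ℤ → ℝ)) (H x) = H (F x))
    (hbdd : ∃ C : ℝ, ∀ x : EuclideanSpace ℝ (Fin d), ‖H x - x‖ ≤ C)
    (hG : UniformContinuous G) :
    ∃ ε : ℕ → ℝ, Filter.Tendsto ε Filter.atTop (nhds 0) ∧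
      ∀ m : ℕ, 1 ≤ m → ∀ (x : EuclideanSpace ℝ (Fin d)) (n : Fin d → ℤ),
        (∀ i : ℕ, 1 ≤ i → i ≤ m → ∃ n' : Fin d → ℤ, (A ^ i).mulVec n' = n) →
        ‖G (x + intVec n) - G x - intVec n‖ ≤ ε m := by
  obtain ⟨C, hC⟩ := hbdd
  have hGC : ∀ y, ‖G y - y‖ ≤ C := fun y => by simpa [hinv₂ y, norm_sub_rev] using hC (G y)
  have hhypℝ : ∀ μ : ℂ,
      ((A.map ((↑) : ℤ → ℝ)).map ((↑) : ℝ → ℂ)).charpoly.IsRoot μ → ‖μ‖ ≠ 1 := by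
    simpa [Matrix.map_map, Function.comp_def] using hhyp
  set admissible : ℕ → Type _ := fun m => {p : EuclideanSpace ℝ (Fin d) × (Fin d → ℤ) //
    ∀ i : ℕ, 1 ≤ i → i ≤ m → ∃ n' : Fin d → ℤ, (A ^ i) *ᵥ n' = p.2}
  have hsmall : ∀ η > 0, ∃ N, ∀ m ≥ N, ∀ p : admissible m,
      ‖translationDefect G p.1.1 (intVec p.1.2)‖ ≤ η := by
    intro η hη
    obtain ⟨δ, hδ, hHG⟩ :=
      exists_norm_translationDefect_lt_of_uniformContinuous hinv₁ hinv₂ hG hη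
    obtain ⟨N, hN⟩ := exists_forall_norm_lt_of_forall_norm_zpow_le hdet hhypℝ (2 * C) hδ
    refine ⟨N, fun m hm ⟨(x, n), hn⟩ => (hHG x _ (hN _ fun k hk => ?_)).le⟩
    exact norm_toEuclideanCLM_zpow_translationDefect_le A hdet hFbij.2 hlift hconj hC hn (G x)
      (by omega)
  obtain ⟨ε, hε, hbound⟩ := exists_tendsto_zero_forall_le
    (fun m (p : admissible m) => ‖translationDefect G p.1.1 (intVec p.1.2)‖)
    (fun _ _ => norm_nonneg _)
    (fun _ => ⟨2 * C, by rintro _ ⟨p, rfl⟩; exact norm_translationDefect_le hGC _ _⟩) hsmall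
  exact ⟨ε, hε, fun m _ x n hn => hbound m ⟨(x, n), hn⟩⟩
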